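/- arXiv:2007.04804 — 2 statements merged into one kernel-verified Lean document; each statement's English description precedes it below -/
import Mathlib

section
/- Let T, S, X, Y ∈ B_A(H). Then w_A(T X S^{#_A} + S Y T^{#_A}) ≤ 2 ‖T‖_A ‖S‖_A · w_𝔸([[O, X],[Y, O]]) and w_A(T X S^{#_A} − S Y T^{#_A}) ≤ 2 ‖T‖_A ‖S‖_A · w_𝔸([[O, X],[Y, O]]). -/
noncomputable section

open ContinuousLinearMap

/-- The semi-inner product induced by a positive operator `A`: `⟪x, y⟫_A = ⟪A x, y⟫`. -/
def sInnerA {E : Type*} [NormedAddCommGroup E] [InnerProductSpace ℂ E]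
    (A : E →L[ℂ] E) (x y : E) : ℂ :=
  inner ℂ (A x) y

/-- The seminorm induced by `A`: `‖x‖_A = √(re ⟪A x, x⟫)`. -/
def sNormA {E : Type*} [NormedAddCommGroup E] [InnerProductSpace ℂ E]
    (A : E →L[ℂ] E) (x : E) : ℝ :=
  Real.sqrt (sInnerA A x x).re

/-- The `A`-operator seminorm: `sup {‖T x‖_A : x ∈ closure (range A), ‖x‖_A = 1}`. -/
def opNormA {E : Type*} [NormedAddCommGroup E] [InnerProductSpace ℂ E]
    (A T : E →L[ℂ] E) : ℝ :=
  sSup {r | ∃ x ∈ closure (Set.range A), sNormA A x = 1 ∧ r = sNormA A (T x)}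

/-- The `A`-numerical radius: `sup {|⟪T x, x⟫_A| : ‖x‖_A = 1}`. -/
def wA {E : Type*} [NormedAddCommGroup E] [InnerProductSpace ℂ E]
    (A T : E →L[ℂ] E) : ℝ :=
  sSup {r | ∃ x, sNormA A x = 1 ∧ r = ‖sInnerA A (T x) x‖}

/-- The `A`-Crawford number: `inf {|⟪T x, x⟫_A| : ‖x‖_A = 1}`. -/
def cA {E : Type*} [NormedAddCommGroup E] [InnerProductSpace ℂ E]
    (A T : E →L[ℂ] E) : ℝ :=
  sInf {r | ∃ x, sNormA A x = 1 ∧ r = ‖sInnerA A (T x) x‖}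

/-- `T ∈ B_A(H)`, i.e. the range of `T* A` is contained in the range of `A`. -/
def memBA {E : Type*} [NormedAddCommGroup E] [InnerProductSpace ℂ E] [CompleteSpace E]
    (A T : E →L[ℂ] E) : Prop :=
  Set.range ((adjoint T) ∘L A) ⊆ Set.range A

/-- `S` is the distinguished `A`-adjoint `T^{#_A}` of `T`:
`A ∘ S = T* ∘ A` and `R(S) ⊆ closure (R(A))`. -/
def IsSharpA {E : Type*} [NormedAddCommGroup E] [InnerProductSpace ℂ E] [CompleteSpace E]
    (A T S : E →L[ℂ] E) : Prop :=
  A ∘L S = (adjoint T) ∘L A ∧ Set.range S ⊆ closure (Set.range A)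

/-- The `2 × 2` operator matrix `[[X, Y], [Z, W]]` acting blockwise on
the Hilbert space direct sum `H ⊕ H`. -/
def blk2 {H : Type*} [NormedAddCommGroup H] [InnerProductSpace ℂ H]
    (X Y Z W : H →L[ℂ] H) : WithLp 2 (H × H) →L[ℂ] WithLp 2 (H × H) :=
  ((WithLp.prodContinuousLinearEquiv 2 ℂ H H).symm : (H × H) →L[ℂ] WithLp 2 (H × H)) ∘L
    ((X ∘L ContinuousLinearMap.fst ℂ H H + Y ∘L ContinuousLinearMap.snd ℂ H H).prod
      (Z ∘L ContinuousLinearMap.fst ℂ H H + W ∘L ContinuousLinearMap.snd ℂ H H)) ∘L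
    ((WithLp.prodContinuousLinearEquiv 2 ℂ H H) : WithLp 2 (H × H) →L[ℂ] H × H)

/-!
Write `A = R† R` (e.g. `R = √A`), so that `‖x‖_A = ‖R x‖` and `⟪x, y⟫_A = ⟪R x, R y⟫`.
By Douglas' lemma every `X ∈ B_A(H)` has an `A`-adjoint `C` (`A C = X† A`); then `C X` is
`A`-symmetric, so Reid's inequality `‖C X v‖_A ≤ ‖C X‖ ‖v‖_A` (a `2^n`-th power iteration) makes
`X` bounded for `‖·‖_A`, and `‖T^{#_A}‖_A ≤ ‖T‖_A` follows.

For `‖x‖_A = 1` put `p = T^{#_A} x`, `q = S^{#_A} x`. Then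
`⟪(T X S^{#_A} + ε² S Y T^{#_A}) x, x⟫_A = ⟪X q, p⟫_A + ε̄² ⟪Y p, q⟫_A`, which up to a unimodular
factor is `⟪M u, u⟫_𝔸` for `M = [[O, X], [Y, O]]` and `u = (√t p, ε̄ q / √t)`. Hence its modulus is
at most `w_𝔸(M) (t ‖p‖_A² + ‖q‖_A² / t)` for every `t > 0`, i.e. at most
`2 w_𝔸(M) ‖p‖_A ‖q‖_A ≤ 2 w_𝔸(M) ‖T‖_A ‖S‖_A`. Take `ε = 1` and `ε = i`.
-/

open scoped InnerProductSpace ComplexConjugate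

lemma le_of_forall_pow_two_pow_mul_le {a b c K : ℝ} (hb : 0 ≤ b) (hc : 0 < c)
    (h : ∀ n : ℕ, a ^ 2 ^ n * c ≤ K * b ^ 2 ^ n) : a ≤ b := by
  by_contra! hba
  rcases hb.eq_or_lt with rfl | hb
  · have := h 0
    simp only [pow_zero, pow_one, mul_zero] at this
    nlinarith
  · have hr : 1 < a / b := (one_lt_div hb).mpr hba
    obtain ⟨m, hm⟩ := pow_unbounded_of_one_lt (K / c) hr
    have hm' : (a / b) ^ 2 ^ m * c ≤ K := by
      rw [div_pow, div_mul_eq_mul_div, div_le_iff₀ (by positivity)]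
      exact h m
    have : (a / b) ^ m ≤ (a / b) ^ 2 ^ m := pow_le_pow_right₀ hr.le Nat.lt_two_pow_self.le
    rw [div_lt_iff₀ hc] at hm
    nlinarith

lemma le_two_mul_mul_of_forall_le_mul {z w a b : ℝ} (hw : 0 ≤ w) (ha : 0 ≤ a) (hb : 0 ≤ b)
    (h : ∀ t > 0, z ≤ w * (t * a ^ 2 + t⁻¹ * b ^ 2)) : z ≤ 2 * w * a * b := by
  refine le_of_forall_pos_le_add fun ε hε => ?_
  set δ := ε / (w * (a + b) + 1)
  have hδ : 0 < δ := by positivity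
  have hδε : w * (δ * (a + b)) ≤ ε := by
    have : δ * (w * (a + b) + 1) = ε := div_mul_cancel₀ _ (by positivity)
    nlinarith
  -- take `t = (b + δ) / (a + δ)`
  have h1 : (b + δ) / (a + δ) * a ^ 2 ≤ (b + δ) * a := by
    rw [div_mul_eq_mul_div, div_le_iff₀ (by positivity)]
    nlinarith [mul_nonneg (mul_nonneg (add_nonneg hb hδ.le) ha) hδ.le]
  have h2 : ((b + δ) / (a + δ))⁻¹ * b ^ 2 ≤ (a + δ) * b := by
    rw [inv_div, div_mul_eq_mul_div, div_le_iff₀ (by positivity)]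
    nlinarith [mul_nonneg (mul_nonneg (add_nonneg ha hδ.le) hb) hδ.le]
  calc z ≤ w * ((b + δ) / (a + δ) * a ^ 2 + ((b + δ) / (a + δ))⁻¹ * b ^ 2) := h _ (by positivity)
    _ ≤ w * ((b + δ) * a + (a + δ) * b) := by gcongr
    _ = 2 * w * a * b + w * (δ * (a + b)) := by ring
    _ ≤ 2 * w * a * b + ε := by linarith

open Filter Topology in
theorem exists_comp_eq_of_range_subset {𝕜 E F G : Type*} [RCLike 𝕜]
    [NormedAddCommGroup E] [InnerProductSpace 𝕜 E] [CompleteSpace E]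
    [NormedAddCommGroup F] [NormedSpace 𝕜 F] [NormedAddCommGroup G] [NormedSpace 𝕜 G]
    [CompleteSpace G] {A : E →L[𝕜] F} {B : G →L[𝕜] F} (h : Set.range B ⊆ Set.range A) :
    ∃ C : G →L[𝕜] E, A ∘L C = B := by
  set K := A.kerᗮ
  have : CompleteSpace A.ker := A.isClosed_ker.completeSpace_coe
  set A' : K →ₗ[𝕜] F := (A : E →ₗ[𝕜] F).domRestrict K
  have hinj : Function.Injective A' := (injective_iff_map_eq_zero A').mpr fun u hu =>
    Subtype.ext (Submodule.disjoint_def.mp (Submodule.orthogonal_disjoint A.ker) u hu u.2)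
  have hB : ∀ x, B x ∈ LinearMap.range A' := fun x => by
    obtain ⟨w, hw⟩ := h (Set.mem_range_self x)
    obtain ⟨y, hy, z, hz, rfl⟩ := A.ker.exists_add_mem_mem_orthogonal w
    have hAy : A y = 0 := hy
    exact ⟨⟨z, hz⟩, by simpa [A', hAy] using hw⟩
  set e := LinearEquiv.ofInjective A' hinj
  set g : G →ₗ[𝕜] K := e.symm ∘ₗ (B : G →ₗ[𝕜] F).codRestrict _ hB
  have hg : ∀ x, A (g x) = B x := fun x => congrArg Subtype.val (e.apply_symm_apply _)
  have hcont : Continuous g := g.continuous_of_seq_closed_graph fun u x y hu hgu => by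
    apply hinj
    have h1 : Tendsto (fun n => A (g (u n))) atTop (𝓝 (A y)) :=
      ((A.continuous.comp continuous_subtype_val).tendsto y).comp hgu
    simp only [hg] at h1
    exact (tendsto_nhds_unique h1 ((B.continuous.tendsto x).comp hu)).trans (hg x).symm
  exact ⟨K.subtypeL ∘L ⟨g, hcont⟩, ContinuousLinearMap.ext hg⟩

lemma opNormA_nonneg {E : Type*} [NormedAddCommGroup E] [InnerProductSpace ℂ E]
    (A T : E →L[ℂ] E) : 0 ≤ opNormA A T :=
  Real.sSup_nonneg (by rintro r ⟨x, -, -, rfl⟩; exact Real.sqrt_nonneg _)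

lemma wA_nonneg {E : Type*} [NormedAddCommGroup E] [InnerProductSpace ℂ E]
    (A T : E →L[ℂ] E) : 0 ≤ wA A T :=
  Real.sSup_nonneg (by rintro r ⟨x, -, rfl⟩; exact norm_nonneg _)

lemma closure_range_eq_topologicalClosure {𝕜 E F : Type*} [NormedField 𝕜]
    [SeminormedAddCommGroup E] [NormedSpace 𝕜 E] [SeminormedAddCommGroup F] [NormedSpace 𝕜 F]
    (A : E →L[𝕜] F) : closure (Set.range A) = (A.range.topologicalClosure : Set F) := by
  rw [Submodule.topologicalClosure_coe, LinearMap.coe_range]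
  rfl

lemma exists_inner_apply_eq_inner_factor {E : Type*} [NormedAddCommGroup E]
    [InnerProductSpace ℂ E] [CompleteSpace E] {A : E →L[ℂ] E} (hA : A.IsPositive) :
    ∃ R : E →L[ℂ] E, ∀ u w, ⟪A u, w⟫_ℂ = ⟪R u, R w⟫_ℂ := by
  have hA0 : 0 ≤ A := (nonneg_iff_isPositive A).mpr hA
  refine ⟨CFC.sqrt A, fun u w => ?_⟩
  have hR : IsSelfAdjoint (CFC.sqrt A) := (CFC.sqrt_nonneg A).isSelfAdjoint
  rw [← hR.adjoint_eq, adjoint_inner_right, hR.adjoint_eq, ← mul_apply_eq_comp,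
    CFC.sqrt_mul_sqrt_self A hA0]

def IsAAdjoint {E : Type*} [NormedAddCommGroup E] [InnerProductSpace ℂ E]
    (A C X : E →L[ℂ] E) : Prop :=
  ∀ u w, ⟪A (C u), w⟫_ℂ = ⟪A u, X w⟫_ℂ

lemma isAAdjoint_of_comp_eq_adjoint_comp {E : Type*} [NormedAddCommGroup E]
    [InnerProductSpace ℂ E] [CompleteSpace E] {A C X : E →L[ℂ] E}
    (h : A ∘L C = adjoint X ∘L A) : IsAAdjoint A C X := fun u w => by
  rw [← comp_apply, h, comp_apply, adjoint_inner_left]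

lemma IsAAdjoint.mul {E : Type*} [NormedAddCommGroup E] [InnerProductSpace ℂ E]
    {A C X D Y : E →L[ℂ] E} (hC : IsAAdjoint A C X) (hD : IsAAdjoint A D Y) :
    IsAAdjoint A (C * D) (Y * X) := fun _ _ => (hC _ _).trans (hD _ _)

section Factor

variable {E : Type*} [NormedAddCommGroup E] [InnerProductSpace ℂ E] {A R : E →L[ℂ] E}
  (hR : ∀ u w, ⟪A u, w⟫_ℂ = ⟪R u, R w⟫_ℂ)
include hR

lemma sq_norm_factor_apply (x : E) : ‖R x‖ ^ 2 = (⟪A x, x⟫_ℂ).re := by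
  rw [hR, inner_self_eq_norm_sq_to_K]; norm_cast

lemma sNormA_eq_norm_factor_apply (x : E) : sNormA A x = ‖R x‖ := by
  rw [sNormA, sInnerA, ← sq_norm_factor_apply hR, Real.sqrt_sq (norm_nonneg _)]

lemma re_inner_apply_le_norm_factor_mul (x y : E) : (⟪A x, y⟫_ℂ).re ≤ ‖R x‖ * ‖R y‖ := by
  rw [hR]
  exact (Complex.re_le_norm _).trans (norm_inner_le_norm _ _)

lemma IsAAdjoint.symm {C X : E →L[ℂ] E} (hC : IsAAdjoint A C X) : IsAAdjoint A X C :=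
  fun u w => by rw [hR, ← inner_conj_symm, ← hR, ← hC, hR, inner_conj_symm, hR]

lemma IsAAdjoint.sq_norm_factor_apply_le {D : E →L[ℂ] E} (hD : IsAAdjoint A D D) (v : E) :
    ‖R (D v)‖ ^ 2 ≤ ‖R v‖ * ‖R (D (D v))‖ := by
  rw [sq_norm_factor_apply hR, hD]
  exact re_inner_apply_le_norm_factor_mul hR _ _

lemma IsAAdjoint.pow_two_pow_mul_le (n : ℕ) :
    ∀ {D : E →L[ℂ] E}, IsAAdjoint A D D →
      ∀ v, ‖R (D v)‖ ^ 2 ^ n * ‖R v‖ ≤ ‖R v‖ ^ 2 ^ n * ‖R ((D ^ 2 ^ n) v)‖ := by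
  induction n with
  | zero => intro D _ v; simp [mul_comm]
  | succ n ih =>
    intro D hD v
    calc ‖R (D v)‖ ^ 2 ^ (n + 1) * ‖R v‖ = (‖R (D v)‖ ^ 2) ^ 2 ^ n * ‖R v‖ := by
          rw [← pow_mul, pow_succ, mul_comm 2]
      _ ≤ (‖R v‖ * ‖R ((D * D) v)‖) ^ 2 ^ n * ‖R v‖ := by
          gcongr; exact hD.sq_norm_factor_apply_le hR v
      _ = ‖R v‖ ^ 2 ^ n * (‖R ((D * D) v)‖ ^ 2 ^ n * ‖R v‖) := by ring
      _ ≤ ‖R v‖ ^ 2 ^ n * (‖R v‖ ^ 2 ^ n * ‖R (((D * D) ^ 2 ^ n) v)‖) :=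
          mul_le_mul_of_nonneg_left (ih (hD.mul hD) v) (by positivity)
      _ = ‖R v‖ ^ 2 ^ (n + 1) * ‖R ((D ^ 2 ^ (n + 1)) v)‖ := by
          rw [← mul_assoc, ← pow_add, ← sq, ← pow_mul, ← two_mul, ← pow_succ']

lemma IsAAdjoint.norm_factor_apply_le_norm_mul {D : E →L[ℂ] E} (hD : IsAAdjoint A D D)
    (v : E) : ‖R (D v)‖ ≤ ‖D‖ * ‖R v‖ := by
  rcases (norm_nonneg (R v)).eq_or_lt with hv | hv
  · have := hD.sq_norm_factor_apply_le hR v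
    rw [← hv, zero_mul] at this
    rw [← hv, mul_zero]
    exact (pow_eq_zero_iff two_ne_zero).mp (le_antisymm this (by positivity)) |>.le
  refine le_of_forall_pow_two_pow_mul_le (by positivity) hv (K := ‖R‖ * ‖v‖) fun n => ?_
  calc ‖R (D v)‖ ^ 2 ^ n * ‖R v‖ ≤ ‖R v‖ ^ 2 ^ n * ‖R ((D ^ 2 ^ n) v)‖ :=
        hD.pow_two_pow_mul_le hR n v
    _ ≤ ‖R v‖ ^ 2 ^ n * (‖R‖ * (‖D‖ ^ 2 ^ n * ‖v‖)) := by
        gcongr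
        refine (R.le_opNorm _).trans (mul_le_mul_of_nonneg_left ?_ (norm_nonneg _))
        exact ((D ^ 2 ^ n).le_opNorm v).trans
          (mul_le_mul_of_nonneg_right (norm_pow_le' D (Nat.two_pow_pos n)) (norm_nonneg _))
    _ = ‖R‖ * ‖v‖ * (‖D‖ * ‖R v‖) ^ 2 ^ n := by ring

lemma IsAAdjoint.exists_bound {C X : E →L[ℂ] E} (hC : IsAAdjoint A C X) :
    ∃ c, 0 ≤ c ∧ ∀ v, ‖R (X v)‖ ≤ c * ‖R v‖ := by
  have hD : IsAAdjoint A (C * X) (C * X) := hC.mul (hC.symm hR)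
  refine ⟨√‖C * X‖, Real.sqrt_nonneg _, fun v => ?_⟩
  have h : ‖R (X v)‖ ^ 2 ≤ ‖C * X‖ * ‖R v‖ ^ 2 :=
    calc ‖R (X v)‖ ^ 2 = (⟪A ((C * X) v), v⟫_ℂ).re := by
          rw [sq_norm_factor_apply hR, mul_apply_eq_comp, hC]
      _ ≤ ‖R ((C * X) v)‖ * ‖R v‖ := re_inner_apply_le_norm_factor_mul hR _ _
      _ ≤ ‖C * X‖ * ‖R v‖ * ‖R v‖ := by
          gcongr; exact hD.norm_factor_apply_le_norm_mul hR v
      _ = ‖C * X‖ * ‖R v‖ ^ 2 := by ring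
  rw [← Real.sqrt_sq (norm_nonneg (R (X v))), ← Real.sqrt_sq (norm_nonneg (R v)),
    ← Real.sqrt_mul (norm_nonneg _)]
  exact Real.sqrt_le_sqrt h

lemma IsAAdjoint.norm_factor_apply_le {C X : E →L[ℂ] E} {c : ℝ} (hC : IsAAdjoint A C X)
    (hc : 0 ≤ c) (hX : ∀ v, ‖R (X v)‖ ≤ c * ‖R v‖) (v : E) : ‖R (C v)‖ ≤ c * ‖R v‖ := by
  have h : ‖R (C v)‖ ^ 2 ≤ c * ‖R v‖ * ‖R (C v)‖ :=
    calc ‖R (C v)‖ ^ 2 = (⟪A v, X (C v)⟫_ℂ).re := by rw [sq_norm_factor_apply hR, hC]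
      _ ≤ ‖R v‖ * ‖R (X (C v))‖ := re_inner_apply_le_norm_factor_mul hR _ _
      _ ≤ ‖R v‖ * (c * ‖R (C v)‖) := by gcongr; exact hX _
      _ = c * ‖R v‖ * ‖R (C v)‖ := by ring
  nlinarith [norm_nonneg (R (C v)), mul_nonneg hc (norm_nonneg (R v))]

lemma norm_factor_apply_le_opNormA_mul_of_mem_closure {T : E →L[ℂ] E} {c : ℝ}
    (hT : ∀ v, ‖R (T v)‖ ≤ c * ‖R v‖) {x : E} (hx : x ∈ closure (Set.range A)) :
    ‖R (T x)‖ ≤ opNormA A T * ‖R x‖ := by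
  rcases (norm_nonneg (R x)).eq_or_lt with hx0 | hx0
  · simpa [← hx0] using hT x
  have hbdd : BddAbove
      {r | ∃ y ∈ closure (Set.range A), sNormA A y = 1 ∧ r = sNormA A (T y)} := by
    refine ⟨c, ?_⟩
    rintro r ⟨y, -, hy, rfl⟩
    rw [sNormA_eq_norm_factor_apply hR] at hy ⊢
    simpa [hy] using hT y
  set y := ((‖R x‖⁻¹ : ℝ) : ℂ) • x
  have hRy : ‖R y‖ = 1 := by
    rw [map_smul, norm_smul, Complex.norm_real, Real.norm_of_nonneg (by positivity),
      inv_mul_cancel₀ hx0.ne']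
  have hRTy : ‖R (T y)‖ = ‖R x‖⁻¹ * ‖R (T x)‖ := by
    rw [map_smul, map_smul, norm_smul, Complex.norm_real, Real.norm_of_nonneg (by positivity)]
  have hy : y ∈ closure (Set.range A) := by
    rw [closure_range_eq_topologicalClosure] at hx ⊢
    exact Submodule.smul_mem _ _ hx
  have hTy : sNormA A (T y) ≤ opNormA A T := by
    refine le_csSup hbdd ⟨y, hy, ?_, rfl⟩
    rw [sNormA_eq_norm_factor_apply hR, hRy]
  rw [sNormA_eq_norm_factor_apply hR, hRTy] at hTy
  rw [mul_comm, ← inv_mul_le_iff₀ hx0]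
  exact hTy

lemma exists_mem_closure_range_factor_sub_eq_zero [CompleteSpace E] (v : E) :
    ∃ v₁ ∈ closure (Set.range A), R (v - v₁) = 0 := by
  set K := A.range.topologicalClosure
  obtain ⟨y, hy, z, hz, rfl⟩ := K.exists_add_mem_mem_orthogonal v
  refine ⟨y, (closure_range_eq_topologicalClosure A).symm ▸ hy, ?_⟩
  have hAz : A z ∈ K := A.range.le_topologicalClosure ⟨z, rfl⟩
  have := sq_norm_factor_apply hR z
  rw [Submodule.inner_right_of_mem_orthogonal hAz hz, Complex.zero_re,
    sq_eq_zero_iff, norm_eq_zero] at this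
  rwa [add_sub_cancel_left]

lemma norm_factor_apply_le_opNormA_mul [CompleteSpace E] {T : E →L[ℂ] E} {c : ℝ}
    (hT : ∀ v, ‖R (T v)‖ ≤ c * ‖R v‖) (v : E) : ‖R (T v)‖ ≤ opNormA A T * ‖R v‖ := by
  obtain ⟨v₁, hv₁, h0⟩ := exists_mem_closure_range_factor_sub_eq_zero hR v
  have hT0 : R (T (v - v₁)) = 0 := norm_le_zero_iff.mp (by simpa [h0] using hT (v - v₁))
  simp only [map_sub, sub_eq_zero] at h0 hT0
  rw [h0, hT0]
  exact norm_factor_apply_le_opNormA_mul_of_mem_closure hR hT hv₁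

lemma IsAAdjoint.norm_factor_apply_le_opNormA_mul [CompleteSpace E] {C X : E →L[ℂ] E}
    (hC : IsAAdjoint A C X) (v : E) : ‖R (C v)‖ ≤ opNormA A X * ‖R v‖ := by
  obtain ⟨c, -, hX⟩ := hC.exists_bound hR
  exact hC.norm_factor_apply_le hR (opNormA_nonneg A X)
    (_root_.norm_factor_apply_le_opNormA_mul hR hX) v

lemma exists_bound_of_memBA [CompleteSpace E] {X : E →L[ℂ] E} (hX : memBA A X) :
    ∃ c, 0 ≤ c ∧ ∀ v, ‖R (X v)‖ ≤ c * ‖R v‖ := by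
  obtain ⟨C, hC⟩ := exists_comp_eq_of_range_subset hX
  exact (isAAdjoint_of_comp_eq_adjoint_comp hC).exists_bound hR

lemma norm_sInnerA_le_wA_mul_sq {T : E →L[ℂ] E} {c : ℝ} (hT : ∀ v, ‖R (T v)‖ ≤ c * ‖R v‖)
    (x : E) : ‖sInnerA A (T x) x‖ ≤ wA A T * ‖R x‖ ^ 2 := by
  rcases (norm_nonneg (R x)).eq_or_lt with hx0 | hx0
  · rw [sInnerA, hR, norm_eq_zero.mp hx0.symm, inner_zero_right, norm_zero]
    exact mul_nonneg (wA_nonneg A T) (sq_nonneg _)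
  have hbdd : BddAbove {r | ∃ y, sNormA A y = 1 ∧ r = ‖sInnerA A (T y) y‖} := by
    refine ⟨c, ?_⟩
    rintro r ⟨y, hy, rfl⟩
    rw [sNormA_eq_norm_factor_apply hR] at hy
    calc ‖sInnerA A (T y) y‖ ≤ ‖R (T y)‖ * ‖R y‖ := by
          rw [sInnerA, hR]; exact norm_inner_le_norm _ _
      _ ≤ c := by simpa [hy] using hT y
  set y := ((‖R x‖⁻¹ : ℝ) : ℂ) • x
  have hy : sNormA A y = 1 := by
    rw [sNormA_eq_norm_factor_apply hR, map_smul, norm_smul, Complex.norm_real,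
      Real.norm_of_nonneg (by positivity), inv_mul_cancel₀ hx0.ne']
  have hTy : ‖sInnerA A (T y) y‖ = (‖R x‖ ^ 2)⁻¹ * ‖sInnerA A (T x) x‖ := by
    rw [sInnerA, sInnerA, map_smul, map_smul, inner_smul_left, inner_smul_right,
      Complex.conj_ofReal, norm_mul, norm_mul, Complex.norm_real,
      Real.norm_of_nonneg (by positivity), ← mul_assoc, ← mul_inv, ← sq]
  have := le_csSup hbdd ⟨y, hy, rfl⟩
  rw [hTy, inv_mul_le_iff₀ (by positivity)] at this
  rwa [mul_comm]

end Factor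

section Block

variable {H : Type*} [NormedAddCommGroup H] [InnerProductSpace ℂ H]

lemma blk2_apply_fst (X Y Z W : H →L[ℂ] H) (u : WithLp 2 (H × H)) :
    (blk2 X Y Z W u).fst = X u.fst + Y u.snd := rfl

lemma blk2_apply_snd (X Y Z W : H →L[ℂ] H) (u : WithLp 2 (H × H)) :
    (blk2 X Y Z W u).snd = Z u.fst + W u.snd := rfl

lemma inner_blk2_diag_apply {A R : H →L[ℂ] H} (hR : ∀ u w, ⟪A u, w⟫_ℂ = ⟪R u, R w⟫_ℂ)
    (u w : WithLp 2 (H × H)) :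
    ⟪blk2 A 0 0 A u, w⟫_ℂ = ⟪blk2 R 0 0 R u, blk2 R 0 0 R w⟫_ℂ := by
  simp only [WithLp.prod_inner_apply, WithLp.ofLp_fst, WithLp.ofLp_snd, blk2_apply_fst,
    blk2_apply_snd, zero_apply, add_zero, zero_add, hR]

lemma sq_norm_blk2_diag_apply (R : H →L[ℂ] H) (u : WithLp 2 (H × H)) :
    ‖blk2 R 0 0 R u‖ ^ 2 = ‖R u.fst‖ ^ 2 + ‖R u.snd‖ ^ 2 := by
  simp only [WithLp.prod_norm_sq_eq_of_L2, blk2_apply_fst, blk2_apply_snd, zero_apply, add_zero,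
    zero_add]

lemma sInnerA_blk2_antidiag_apply (A X Y : H →L[ℂ] H) (u : WithLp 2 (H × H)) :
    sInnerA (blk2 A 0 0 A) (blk2 0 X Y 0 u) u =
      ⟪A (X u.snd), u.fst⟫_ℂ + ⟪A (Y u.fst), u.snd⟫_ℂ := by
  simp only [sInnerA, WithLp.prod_inner_apply, WithLp.ofLp_fst, WithLp.ofLp_snd, blk2_apply_fst,
    blk2_apply_snd, zero_apply, add_zero, zero_add]

lemma exists_bound_blk2_antidiag {R X Y : H →L[ℂ] H}
    (hX : ∃ c, 0 ≤ c ∧ ∀ v, ‖R (X v)‖ ≤ c * ‖R v‖) (hY : ∃ c, 0 ≤ c ∧ ∀ v, ‖R (Y v)‖ ≤ c * ‖R v‖) :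
    ∃ c, 0 ≤ c ∧ ∀ u, ‖blk2 R 0 0 R (blk2 0 X Y 0 u)‖ ≤ c * ‖blk2 R 0 0 R u‖ := by
  obtain ⟨cX, hcX, hX⟩ := hX
  obtain ⟨cY, -, hY⟩ := hY
  set c := max cX cY
  refine ⟨c, hcX.trans (le_max_left _ _), fun u => ?_⟩
  have h1 : ‖R (X u.snd)‖ ≤ c * ‖R u.snd‖ := (hX _).trans (by gcongr; exact le_max_left _ _)
  have h2 : ‖R (Y u.fst)‖ ≤ c * ‖R u.fst‖ := (hY _).trans (by gcongr; exact le_max_right _ _)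
  rw [← sq_le_sq₀ (norm_nonneg _) (by positivity), mul_pow, sq_norm_blk2_diag_apply,
    sq_norm_blk2_diag_apply]
  simp only [blk2_apply_fst, blk2_apply_snd, zero_apply, zero_add, add_zero]
  calc ‖R (X u.snd)‖ ^ 2 + ‖R (Y u.fst)‖ ^ 2 ≤ (c * ‖R u.snd‖) ^ 2 + (c * ‖R u.fst‖) ^ 2 := by
        gcongr
    _ = c ^ 2 * (‖R u.fst‖ ^ 2 + ‖R u.snd‖ ^ 2) := by ring

lemma norm_inner_add_sq_mul_inner_le {A R X Y : H →L[ℂ] H}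
    (hR : ∀ u w, ⟪A u, w⟫_ℂ = ⟪R u, R w⟫_ℂ)
    (hX : ∃ c, 0 ≤ c ∧ ∀ v, ‖R (X v)‖ ≤ c * ‖R v‖) (hY : ∃ c, 0 ≤ c ∧ ∀ v, ‖R (Y v)‖ ≤ c * ‖R v‖)
    {ε : ℂ} (hε : ‖ε‖ = 1) (p q : H) :
    ‖⟪A (X q), p⟫_ℂ + conj ε ^ 2 * ⟪A (Y p), q⟫_ℂ‖ ≤
      2 * wA (blk2 A 0 0 A) (blk2 0 X Y 0) * ‖R p‖ * ‖R q‖ := by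
  obtain ⟨c, -, hM⟩ := exists_bound_blk2_antidiag hX hY
  refine le_two_mul_mul_of_forall_le_mul (wA_nonneg _ _) (norm_nonneg _) (norm_nonneg _)
    fun t ht => ?_
  have hs : 0 < √t := Real.sqrt_pos.mpr ht
  have := norm_sInnerA_le_wA_mul_sq (inner_blk2_diag_apply hR) hM
    (WithLp.toLp 2 ((√t : ℂ) • p, (conj ε * (√t : ℂ)⁻¹) • q))
  rw [sInnerA_blk2_antidiag_apply, sq_norm_blk2_diag_apply] at this
  have hεε : conj ε * ε = 1 := by rw [Complex.conj_mul', hε]; simp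
  have hs' : (√t : ℂ) ≠ 0 := Complex.ofReal_ne_zero.mpr hs.ne'
  calc ‖⟪A (X q), p⟫_ℂ + conj ε ^ 2 * ⟪A (Y p), q⟫_ℂ‖
      = ‖ε * (⟪A (X q), p⟫_ℂ + conj ε ^ 2 * ⟪A (Y p), q⟫_ℂ)‖ := by
        rw [norm_mul, hε, one_mul]
    _ ≤ _ := this.trans_eq' ?_
    _ = _ := ?_
  · congr 1
    simp only [WithLp.toLp_fst, WithLp.toLp_snd, map_smul, inner_smul_left, inner_smul_right,
      map_mul, map_inv₀, Complex.conj_ofReal, Complex.conj_conj]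
    linear_combination (ε * ⟪A (X q), p⟫_ℂ + conj ε * ⟪A (Y p), q⟫_ℂ) * mul_inv_cancel₀ hs' -
      (conj ε * ⟪A (Y p), q⟫_ℂ) * hεε
  · simp only [WithLp.toLp_fst, WithLp.toLp_snd, map_smul, norm_smul, norm_mul, norm_inv,
      Complex.norm_conj, hε, Complex.norm_real, Real.norm_of_nonneg hs.le, one_mul, mul_pow,
      inv_pow, Real.sq_sqrt ht.le]

lemma wA_comp_add_sq_smul_comp_le {A R T S X Y Ts Ss : H →L[ℂ] H}
    (hR : ∀ u w, ⟪A u, w⟫_ℂ = ⟪R u, R w⟫_ℂ)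
    (hTs : IsAAdjoint A Ts T) (hSs : IsAAdjoint A Ss S)
    (hTsb : ∀ v, ‖R (Ts v)‖ ≤ opNormA A T * ‖R v‖) (hSsb : ∀ v, ‖R (Ss v)‖ ≤ opNormA A S * ‖R v‖)
    (hX : ∃ c, 0 ≤ c ∧ ∀ v, ‖R (X v)‖ ≤ c * ‖R v‖) (hY : ∃ c, 0 ≤ c ∧ ∀ v, ‖R (Y v)‖ ≤ c * ‖R v‖)
    {ε : ℂ} (hε : ‖ε‖ = 1) :
    wA A (T ∘L X ∘L Ss + ε ^ 2 • (S ∘L Y ∘L Ts)) ≤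
      2 * opNormA A T * opNormA A S * wA (blk2 A 0 0 A) (blk2 0 X Y 0) := by
  have := opNormA_nonneg A T
  have := opNormA_nonneg A S
  have := wA_nonneg (blk2 A 0 0 A) (blk2 0 X Y 0)
  refine Real.sSup_le ?_ (by positivity)
  rintro _ ⟨x, hx, rfl⟩
  rw [sNormA_eq_norm_factor_apply hR] at hx
  have hval : sInnerA A ((T ∘L X ∘L Ss + ε ^ 2 • (S ∘L Y ∘L Ts)) x) x =
      ⟪A (X (Ss x)), Ts x⟫_ℂ + conj ε ^ 2 * ⟪A (Y (Ts x)), Ss x⟫_ℂ := by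
    simp only [sInnerA, add_apply, smul_apply, comp_apply, map_add, map_smul, inner_add_left,
      inner_smul_left, map_pow]
    rw [hTs.symm hR, hSs.symm hR]
  rw [hval]
  calc _ ≤ 2 * wA (blk2 A 0 0 A) (blk2 0 X Y 0) * ‖R (Ts x)‖ * ‖R (Ss x)‖ :=
        norm_inner_add_sq_mul_inner_le hR hX hY hε _ _
    _ ≤ 2 * wA (blk2 A 0 0 A) (blk2 0 X Y 0) * opNormA A T * opNormA A S := by
        gcongr
        · simpa [hx] using hTsb x
        · simpa [hx] using hSsb x
    _ = _ := by ring

end Block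

theorem stmt6_general {H : Type*} [NormedAddCommGroup H] [InnerProductSpace ℂ H] [CompleteSpace H]
    (A : H →L[ℂ] H) (hA : A.IsPositive)
    (T S X Y Ts Ss : H →L[ℂ] H)
    (hX : memBA A X) (hY : memBA A Y)
    (hTs : IsSharpA A T Ts) (hSs : IsSharpA A S Ss) :
    wA A (T ∘L X ∘L Ss + S ∘L Y ∘L Ts) ≤
        2 * opNormA A T * opNormA A S * wA (blk2 A 0 0 A) (blk2 0 X Y 0) ∧
      wA A (T ∘L X ∘L Ss - S ∘L Y ∘L Ts) ≤
        2 * opNormA A T * opNormA A S * wA (blk2 A 0 0 A) (blk2 0 X Y 0) := by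
  obtain ⟨R, hR⟩ := exists_inner_apply_eq_inner_factor hA
  have hTs' := isAAdjoint_of_comp_eq_adjoint_comp hTs.1
  have hSs' := isAAdjoint_of_comp_eq_adjoint_comp hSs.1
  have key : ∀ ε : ℂ, ‖ε‖ = 1 → wA A (T ∘L X ∘L Ss + ε ^ 2 • (S ∘L Y ∘L Ts)) ≤
      2 * opNormA A T * opNormA A S * wA (blk2 A 0 0 A) (blk2 0 X Y 0) := fun ε hε =>
    wA_comp_add_sq_smul_comp_le hR hTs' hSs'
      (hTs'.norm_factor_apply_le_opNormA_mul hR) (hSs'.norm_factor_apply_le_opNormA_mul hR)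
      (exists_bound_of_memBA hR hX) (exists_bound_of_memBA hR hY) hε
  constructor
  · simpa using key 1 norm_one
  · simpa [sub_eq_add_neg] using key Complex.I Complex.norm_I

theorem stmt6 {H : Type*} [NormedAddCommGroup H] [InnerProductSpace ℂ H] [CompleteSpace H]
    (A : H →L[ℂ] H) (hA : A.IsPositive)
    (T S X Y Ts Ss : H →L[ℂ] H)
    (hT : memBA A T) (hS : memBA A S) (hX : memBA A X) (hY : memBA A Y)
    (hTs : IsSharpA A T Ts) (hSs : IsSharpA A S Ss) :
    wA A (T ∘L X ∘L Ss + S ∘L Y ∘L Ts) ≤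
        2 * opNormA A T * opNormA A S * wA (blk2 A 0 0 A) (blk2 0 X Y 0) ∧
      wA A (T ∘L X ∘L Ss - S ∘L Y ∘L Ts) ≤
        2 * opNormA A T * opNormA A S * wA (blk2 A 0 0 A) (blk2 0 X Y 0) :=
  stmt6_general A hA T S X Y Ts Ss hX hY hTs hSs
end
end

section
/- Let P denote the orthogonal projection of H onto the closure of the range of A. Then for every T ∈ B_A(H), w_A(P∘T) = w_A(T∘P) = w_A(T). -/
noncomputable section

open ContinuousLinearMap

/-- The orthogonal projection of `H` onto the closure of the range of `A`,
as an operator `H →L[ℂ] H`. -/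
def rangeProj {H : Type*} [NormedAddCommGroup H] [InnerProductSpace ℂ H] [CompleteSpace H]
    (A : H →L[ℂ] H) : H →L[ℂ] H :=
  haveI : CompleteSpace ((LinearMap.range (A : H →ₗ[ℂ] H)).topologicalClosure) :=
    (Submodule.isClosed_topologicalClosure _).completeSpace_coe
  ((LinearMap.range (A : H →ₗ[ℂ] H)).topologicalClosure).subtypeL ∘L
    Submodule.orthogonalProjectionOnto ((LinearMap.range (A : H →ₗ[ℂ] H)).topologicalClosure)

/-!
Since `P` fixes the range of `A`, `P ∘ A = A`; taking adjoints, `A ∘ P = A` as `A` and `P` are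
self-adjoint, so `⟪P T x, x⟫_A = ⟪T x, x⟫_A`. On the other side, `⟪T P x, x⟫_A = ⟪P x, T* A x⟫`, and
`T ∈ B_A(H)` puts `T* A x` in the range of `A`, where `P` acts as the identity. So all three operators
have the same `A`-quadratic form, hence the same `A`-numerical radius.
-/

section RangeProjection

variable {H : Type*} [NormedAddCommGroup H] [InnerProductSpace ℂ H] [CompleteSpace H]

lemma rangeProj_eq_starProjection (A : H →L[ℂ] H) :
    rangeProj A = (LinearMap.range (A : H →ₗ[ℂ] H)).topologicalClosure.starProjection :=
  rfl

lemma isSelfAdjoint_rangeProj (A : H →L[ℂ] H) : IsSelfAdjoint (rangeProj A) := by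
  rw [rangeProj_eq_starProjection]
  exact isSelfAdjoint_starProjection _

lemma rangeProj_apply_of_mem_closure_range {A : H →L[ℂ] H} {y : H}
    (hy : y ∈ closure (Set.range A)) : rangeProj A y = y := by
  rw [rangeProj_eq_starProjection, Submodule.starProjection_eq_self_iff, ← SetLike.mem_coe,
    Submodule.topologicalClosure_coe]
  simpa [LinearMap.coe_range] using hy

lemma rangeProj_comp (A : H →L[ℂ] H) : rangeProj A ∘L A = A :=
  ContinuousLinearMap.ext fun x =>
    rangeProj_apply_of_mem_closure_range (subset_closure (Set.mem_range_self x))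

lemma comp_rangeProj {A : H →L[ℂ] H} (hA : IsSelfAdjoint A) : A ∘L rangeProj A = A := by
  have h := congrArg adjoint (rangeProj_comp A)
  rwa [adjoint_comp, (isSelfAdjoint_rangeProj A).adjoint_eq, hA.adjoint_eq] at h

lemma inner_rangeProj_left_of_mem_closure_range {A : H →L[ℂ] H} (x : H) {y : H}
    (hy : y ∈ closure (Set.range A)) : inner ℂ (rangeProj A x) y = inner ℂ x y := by
  rw [← adjoint_inner_right, (isSelfAdjoint_rangeProj A).adjoint_eq,
    rangeProj_apply_of_mem_closure_range hy]

lemma sInnerA_rangeProj_comp_apply {A : H →L[ℂ] H} (hA : IsSelfAdjoint A) (T : H →L[ℂ] H)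
    (x : H) : sInnerA A ((rangeProj A ∘L T) x) x = sInnerA A (T x) x := by
  rw [sInnerA, ← comp_apply A, ← comp_assoc, comp_rangeProj hA, comp_apply, sInnerA]

lemma sInnerA_comp_rangeProj_apply {A T : H →L[ℂ] H} (hA : IsSelfAdjoint A) (hT : memBA A T)
    (x : H) : sInnerA A ((T ∘L rangeProj A) x) x = sInnerA A (T x) x := by
  have hmem : adjoint T (A x) ∈ closure (Set.range A) := subset_closure (hT ⟨x, rfl⟩)
  calc sInnerA A ((T ∘L rangeProj A) x) x
      = inner ℂ (rangeProj A x) (adjoint T (A x)) := by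
        rw [sInnerA, comp_apply, ← adjoint_inner_right, hA.adjoint_eq, adjoint_inner_right]
    _ = inner ℂ x (adjoint T (A x)) := inner_rangeProj_left_of_mem_closure_range x hmem
    _ = sInnerA A (T x) x := by
        rw [sInnerA, adjoint_inner_right, ← adjoint_inner_right A, hA.adjoint_eq]

end RangeProjection

lemma wA_congr {E : Type*} [NormedAddCommGroup E] [InnerProductSpace ℂ E] {A S T : E →L[ℂ] E}
    (h : ∀ x, sInnerA A (S x) x = sInnerA A (T x) x) : wA A S = wA A T := by
  simp only [wA, h]

theorem stmt8 {H : Type*} [NormedAddCommGroup H] [InnerProductSpace ℂ H] [CompleteSpace H]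
    (A : H →L[ℂ] H) (hA : A.IsPositive)
    (T : H →L[ℂ] H) (hT : memBA A T) :
    wA A (rangeProj A ∘L T) = wA A T ∧ wA A (T ∘L rangeProj A) = wA A T :=
  ⟨wA_congr (sInnerA_rangeProj_comp_apply hA.isSelfAdjoint T),
    wA_congr (sInnerA_comp_rangeProj_apply hA.isSelfAdjoint hT)⟩
end
end
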